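/- Define f(C,φ) = (1 + C)/2 − C(1−C)·cos²φ and g(C,φ) = (1 + C)/2 − C(1−C)·sin²φ for C ∈ [0,1], φ ∈ ℝ. Then: (i) f(C,φ) + g(C,φ) = 1 + C² ('Pythagoras in the phase plane'); (ii) 4·f(C,φ)·g(C,φ) = 1 + C² + 2C³ + C²(1−C)²·sin²(2φ); (iii) (1/2)·√(1 + C² + 2C³) ≤ √(f(C,φ)·g(C,φ)) ≤ (1 + C²)/2, and hence the uncertainty product ΔX·ΔP = √(f·g) satisfies 1/2 ≤ ΔX·ΔP ≤ 1, with value 1/2 at C = 0 and value 1 at C = 1. -/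

import Mathlib

/-!
Since `sin² φ + cos² φ = 1`, the sum `f + g` does not depend on `φ`, and expanding the product
leaves a single phase-dependent term `C²(1 - C)² sin² φ cos² φ = C²(1 - C)² sin²(2φ) / 4 ≥ 0`.
Dropping it gives the lower bound on `f g`; the upper bound is AM-GM, `4 f g ≤ (f + g)²`.
-/

noncomputable section

/-- The squared dispersion `(ΔX)²` of the coordinate quadrature in a super-coherent
state with concurrence `C` and phase `φ`. -/
noncomputable def f (C φ : ℝ) : ℝ := (1 + C) / 2 - C * (1 - C) * Real.cos φ ^ 2

/-- The squared dispersion `(ΔP)²` of the momentum quadrature in a super-coherent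
state with concurrence `C` and phase `φ`. -/
noncomputable def g (C φ : ℝ) : ℝ := (1 + C) / 2 - C * (1 - C) * Real.sin φ ^ 2

theorem f_add_g (C φ : ℝ) : f C φ + g C φ = 1 + C ^ 2 := by
  unfold f g
  linear_combination (-(C * (1 - C))) * Real.sin_sq_add_cos_sq φ

theorem four_mul_f_mul_g (C φ : ℝ) :
    4 * (f C φ * g C φ) =
      1 + C ^ 2 + 2 * C ^ 3 + C ^ 2 * (1 - C) ^ 2 * Real.sin (2 * φ) ^ 2 := by
  unfold f g
  rw [Real.sin_two_mul]
  linear_combination (-(2 * (1 + C) * C * (1 - C))) * Real.sin_sq_add_cos_sq φ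

theorem half_mul_sqrt_le_sqrt_f_mul_g (C φ : ℝ) :
    1 / 2 * √(1 + C ^ 2 + 2 * C ^ 3) ≤ √(f C φ * g C φ) := by
  have hlower : (1 + C ^ 2 + 2 * C ^ 3) / 4 ≤ f C φ * g C φ := by
    have := four_mul_f_mul_g C φ
    nlinarith [mul_nonneg (sq_nonneg (C * (1 - C))) (sq_nonneg (Real.sin (2 * φ)))]
  calc 1 / 2 * √(1 + C ^ 2 + 2 * C ^ 3)
      = √((1 + C ^ 2 + 2 * C ^ 3) / 4) := by
        rw [Real.sqrt_div' _ (by norm_num), show (4 : ℝ) = 2 ^ 2 by norm_num,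
          Real.sqrt_sq (by norm_num)]
        ring
    _ ≤ √(f C φ * g C φ) := Real.sqrt_le_sqrt hlower

theorem sqrt_f_mul_g_le (C φ : ℝ) : √(f C φ * g C φ) ≤ (1 + C ^ 2) / 2 := by
  rw [Real.sqrt_le_left (by positivity)]
  nlinarith [four_mul_le_sq_add (f C φ) (g C φ), f_add_g C φ]

theorem f_mul_g_of_eq_zero_or_one {C : ℝ} (hC : C = 0 ∨ C = 1) (φ : ℝ) :
    f C φ * g C φ = (1 + C) / 2 * ((1 + C) / 2) := by
  have hcoeff : C * (1 - C) = 0 := by rcases hC with rfl | rfl <;> norm_num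
  simp only [f, g, hcoeff, zero_mul, sub_zero]

/-- For `C ∈ [0,1]` and `φ ∈ ℝ`:
(i) `f + g = 1 + C²` ("Pythagoras in the phase plane");
(ii) `4·f·g = 1 + C² + 2C³ + C²(1−C)²·sin²(2φ)`;
(iii) `(1/2)·√(1 + C² + 2C³) ≤ √(f·g) ≤ (1 + C²)/2`, hence the uncertainty product
`ΔX·ΔP = √(f·g)` satisfies `1/2 ≤ ΔX·ΔP ≤ 1`, with value `1/2` at `C = 0` and
value `1` at `C = 1`. -/
theorem uncertainty_product_bounds (C φ : ℝ) (hC0 : 0 ≤ C) (hC1 : C ≤ 1) :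
    f C φ + g C φ = 1 + C ^ 2 ∧
    4 * (f C φ * g C φ) =
      1 + C ^ 2 + 2 * C ^ 3 + C ^ 2 * (1 - C) ^ 2 * Real.sin (2 * φ) ^ 2 ∧
    (1 / 2 * Real.sqrt (1 + C ^ 2 + 2 * C ^ 3) ≤ Real.sqrt (f C φ * g C φ) ∧
      Real.sqrt (f C φ * g C φ) ≤ (1 + C ^ 2) / 2) ∧
    (1 / 2 ≤ Real.sqrt (f C φ * g C φ) ∧ Real.sqrt (f C φ * g C φ) ≤ 1) ∧
    Real.sqrt (f 0 φ * g 0 φ) = 1 / 2 ∧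
    Real.sqrt (f 1 φ * g 1 φ) = 1 := by
  have hlower := half_mul_sqrt_le_sqrt_f_mul_g C φ
  have hupper := sqrt_f_mul_g_le C φ
  have hone_le : 1 ≤ √(1 + C ^ 2 + 2 * C ^ 3) :=
    Real.one_le_sqrt.mpr (by nlinarith [pow_nonneg hC0 3])
  have hsq_le_one : C ^ 2 ≤ 1 := pow_le_one₀ hC0 hC1
  refine ⟨f_add_g C φ, four_mul_f_mul_g C φ, ⟨hlower, hupper⟩,
    ⟨by linarith, by linarith⟩, ?_, ?_⟩
  · rw [f_mul_g_of_eq_zero_or_one (.inl rfl), Real.sqrt_mul_self (by norm_num)]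
    norm_num
  · rw [f_mul_g_of_eq_zero_or_one (.inr rfl), Real.sqrt_mul_self (by norm_num)]
    norm_num
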